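/- arXiv:1510.06171 — 3 statements merged into one kernel-verified Lean document; each statement's English description precedes it below -/
import Mathlib

section
/- Let γ ∈ H²([0, L], ℝ³), L > 0, be parametrized by arclength with constant curvature |γ''| = 4π almost everywhere and with γ(0) = γ(L). Then L ≥ 1/2, and equality L = 1/2 holds if and only if γ parametrizes a round circle of radius 1/(4π). -/
/-!
The unit tangent `T = γ'` is a `4π`-Lipschitz curve on the unit sphere, so the spherical distance
between `T s` and `T t` is at most `4π |t - s|`, while `∫₀ᴸ T = γ L - γ 0 = 0`. If `4πL ≤ 2π`,
pairing with `T (L/2)` gives `∫₀ᴸ cos (4π (x - L/2)) dx ≤ ∫₀ᴸ ⟪T x, T (L/2)⟫ dx = 0`, and the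
left side is positive unless `4πL = 2π`. In that case both sides vanish, so the comparison is a
pointwise equality: first `T 0 = -T (L/2) = T L`, so `T` is a closed curve, and then comparing
around an arbitrary base point `c` gives `⟪T x, T c⟫ = cos (4π (x - c))`. Hence `T` runs once
around a great circle at constant speed, and `γ` is a circle of radius `1/(4π)`.
-/

open Real Set MeasureTheory Filter Topology InnerProductGeometry
open scoped RealInnerProductSpace NNReal

section Sphere

variable {E : Type*} [NormedAddCommGroup E] [InnerProductSpace ℝ E]

/-- For unit vectors, `‖u - v‖ = 2 * sin (angle u v / 2)`. -/
lemma angle_lt_of_norm_sub_lt {u v : E} (hu : ‖u‖ = 1) (hv : ‖v‖ = 1) {x : ℝ} (hx₀ : 0 ≤ x)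
    (h : ‖u - v‖ < 2 * sin (x / 2)) : angle u v < x := by
  by_contra! hle
  have hcos : cos (angle u v) ≤ cos x :=
    cos_le_cos_of_nonneg_of_le_pi hx₀ (angle_le_pi u v) hle
  have hsq : ‖u - v‖ ^ 2 < (2 * sin (x / 2)) ^ 2 :=
    pow_lt_pow_left₀ h (norm_nonneg _) two_ne_zero
  rw [← inner_eq_cos_angle_of_norm_eq_one hu hv] at hcos
  rw [norm_sub_sq_real, hu, hv, mul_pow, sin_sq_eq_half_sub, show 2 * (x / 2) = x by ring] at hsq
  linarith

lemma eventually_mul_sub_lt_two_mul_sin_half {K r : ℝ} (hKr : K < r) (t : ℝ) :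
    ∀ᶠ z in 𝓝[>] t, K * (z - t) < 2 * sin (r * (z - t) / 2) := by
  have hderiv : HasDerivAt (fun z => 2 * sin (r * (z - t) / 2)) r t := by
    refine (((hasDerivAt_id' t).sub_const t).const_mul r |>.div_const 2 |>.sin.const_mul 2)
      |>.congr_deriv ?_
    simp only [sub_self, mul_zero, zero_div, cos_zero]
    ring
  have hslope := (hasDerivAt_iff_tendsto_slope.mp hderiv).mono_left
    (nhdsWithin_mono _ fun z (hz : t < z) => hz.ne')
  filter_upwards [hslope.eventually_const_lt hKr, self_mem_nhdsWithin] with z hlt (hz : t < z)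
  rw [slope_def_field, sub_self, mul_zero, zero_div, sin_zero, mul_zero, sub_zero,
    lt_div_iff₀ (sub_pos.2 hz)] at hlt
  exact hlt

/-- The angle `t ↦ angle (U a) (U t)` has upper right Dini derivative at most `K`, because to first
order the chord bound `‖U z - U t‖ ≤ K * (z - t)` is also an angle bound. -/
lemma angle_le_mul_of_lipschitzOnWith {U : ℝ → E} {K : ℝ≥0} {a b : ℝ} (hab : a ≤ b)
    (hU : ∀ t ∈ Icc a b, ‖U t‖ = 1) (hlip : LipschitzOnWith K U (Icc a b)) :
    angle (U a) (U b) ≤ K * (b - a) := by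
  have hne : ∀ t ∈ Icc a b, U t ≠ 0 := fun t ht => norm_ne_zero_iff.1 (by simp [hU t ht])
  have ha : a ∈ Icc a b := left_mem_Icc.2 hab
  have hcont : ContinuousOn (fun t => angle (U a) (U t)) (Icc a b) := fun t ht =>
    (continuousAt_angle (x := (U a, U t)) (hne a ha) (hne t ht)).comp_continuousWithinAt
      (f := fun t => (U a, U t)) (continuousWithinAt_const.prodMk (hlip.continuousOn t ht))
  refine image_le_of_liminf_slope_right_le_deriv_boundary hcont
    (by simp [angle_self (hne a ha)]) (by fun_prop)
    (fun t _ => (((hasDerivAt_id t).sub_const a).const_mul (K : ℝ)).hasDerivWithinAt) ?_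
    (right_mem_Icc.2 hab)
  intro t ht r hr
  rw [mul_one] at hr
  refine Eventually.frequently ?_
  filter_upwards [eventually_mul_sub_lt_two_mul_sin_half hr t, Ioc_mem_nhdsGT ht.2]
    with z hz hzb
  have ht' : t ∈ Icc a b := Ico_subset_Icc_self ht
  have hz' : z ∈ Icc a b := ⟨ht.1.trans hzb.1.le, hzb.2⟩
  have htz : angle (U t) (U z) < r * (z - t) :=
    angle_lt_of_norm_sub_lt (hU t ht') (hU z hz')
      (mul_nonneg (K.2.trans hr.le) (sub_nonneg.2 hzb.1.le))
      ((hlip.norm_sub_le_of_le ht' hz' (by rw [norm_sub_rev, Real.norm_of_nonneg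
        (sub_nonneg.2 hzb.1.le)])).trans_lt hz)
  have htri := angle_le_angle_add_angle (U a) (U t) (U z)
  rw [slope_def_field, div_lt_iff₀ (sub_pos.2 hzb.1)]
  linarith

lemma angle_le_mul_abs_sub_of_lipschitzOnWith {U : ℝ → E} {K : ℝ≥0} {a b : ℝ}
    (hU : ∀ t ∈ Icc a b, ‖U t‖ = 1) (hlip : LipschitzOnWith K U (Icc a b)) {s t : ℝ}
    (hs : s ∈ Icc a b) (ht : t ∈ Icc a b) : angle (U s) (U t) ≤ K * |t - s| := by
  wlog hst : s ≤ t generalizing s t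
  · rw [angle_comm, abs_sub_comm]
    exact this ht hs (le_of_not_ge hst)
  have hsub : Icc s t ⊆ Icc a b := Icc_subset_Icc hs.1 ht.2
  rw [abs_of_nonneg (sub_nonneg.2 hst)]
  exact angle_le_mul_of_lipschitzOnWith hst (fun x hx => hU x (hsub hx)) (hlip.mono hsub)

lemma cos_le_inner_of_angle_le {u v : E} (hu : ‖u‖ = 1) (hv : ‖v‖ = 1) {x : ℝ}
    (hux : angle u v ≤ x) (hxπ : x ≤ π) : cos x ≤ ⟪u, v⟫ := by
  rw [inner_eq_cos_angle_of_norm_eq_one hu hv]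
  exact cos_le_cos_of_nonneg_of_le_pi (angle_nonneg u v) hxπ hux

lemma cos_le_inner_of_lipschitzOnWith {U : ℝ → E} {K : ℝ≥0} {a b : ℝ}
    (hU : ∀ t ∈ Icc a b, ‖U t‖ = 1) (hlip : LipschitzOnWith K U (Icc a b)) {s t : ℝ}
    (hs : s ∈ Icc a b) (ht : t ∈ Icc a b) (hπ : K * |t - s| ≤ π) :
    cos (K * (t - s)) ≤ ⟪U s, U t⟫ := by
  rw [← cos_abs, abs_mul, NNReal.abs_eq]
  exact cos_le_inner_of_angle_le (hU s hs) (hU t ht)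
    (angle_le_mul_abs_sub_of_lipschitzOnWith hU hlip hs ht) hπ

lemma eq_smul_add_smul_of_inner_eq {v e₁ e₂ : E} (hv : ‖v‖ = 1) (he₁ : ‖e₁‖ = 1)
    (he₂ : ‖e₂‖ = 1) (he : ⟪e₁, e₂⟫ = 0)
    {a b : ℝ} (hab : a ^ 2 + b ^ 2 = 1) (h₁ : ⟪v, e₁⟫ = a) (h₂ : ⟪v, e₂⟫ = b) :
    v = a • e₁ + b • e₂ := by
  rw [← sub_eq_zero, ← norm_eq_zero, ← sq_eq_zero_iff]
  rw [norm_sub_sq_real, norm_add_sq_real, inner_add_right, real_inner_smul_right,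
    real_inner_smul_right, real_inner_smul_left, real_inner_smul_right, he, norm_smul, norm_smul,
    h₁, h₂, hv, he₁, he₂, Real.norm_eq_abs, Real.norm_eq_abs, mul_pow, mul_pow, sq_abs, sq_abs]
  linear_combination (-1 : ℝ) * hab

end Sphere

lemma integral_cos_mul_sub {K : ℝ} (hK : K ≠ 0) (a b c : ℝ) :
    ∫ x in a..b, cos (K * (x - c)) = (sin (K * (b - c)) - sin (K * (a - c))) / K := by
  simp only [mul_sub]
  rw [intervalIntegral.integral_comp_mul_sub (fun x => cos x) hK, integral_cos, smul_eq_mul]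
  field_simp

lemma intervalIntegral_inner_left {E : Type*} [NormedAddCommGroup E] [InnerProductSpace ℝ E]
    [CompleteSpace E] {f : ℝ → E} {a b : ℝ} (hf : IntervalIntegrable f volume a b) (w : E) :
    ∫ x in a..b, ⟪f x, w⟫ = ⟪∫ x in a..b, f x, w⟫ := by
  simpa only [innerSL_apply_apply, real_inner_comm w] using
    (innerSL ℝ w).intervalIntegral_comp_comm hf

lemma eqOn_of_le_of_integral_le {f g : ℝ → ℝ} {a b : ℝ} (hab : a < b)
    (hf : ContinuousOn f (Icc a b)) (hg : ContinuousOn g (Icc a b))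
    (hle : ∀ x ∈ Icc a b, g x ≤ f x) (hint : ∫ x in a..b, f x ≤ ∫ x in a..b, g x) :
    EqOn f g (Icc a b) := by
  intro x hx
  by_contra hne
  have := intervalIntegral.integral_lt_integral_of_continuousOn_of_le_of_exists_lt hab hg hf
    (fun t ht => hle t (Ioc_subset_Icc_self ht)) ⟨x, hx, lt_of_le_of_ne (hle x hx) (Ne.symm hne)⟩
  linarith

lemma lipschitzOnWith_of_eq_add_integral {F : Type*} [NormedAddCommGroup F] [NormedSpace ℝ F]
    {f f' : ℝ → F} {a b : ℝ} {K : ℝ≥0} (hf : ∀ x ∈ Icc a b, f x = f a + ∫ s in a..x, f' s)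
    (hint : IntegrableOn f' (Icc a b)) (hbound : ∀ᵐ x ∂volume.restrict (Icc a b), ‖f' x‖ ≤ K) :
    LipschitzOnWith K f (Icc a b) := by
  have hint' : ∀ x ∈ Icc a b, IntervalIntegrable f' volume a x := fun x hx =>
    IntegrableOn.intervalIntegrable
      (hint.mono_set (uIcc_subset_Icc (left_mem_Icc.2 (hx.1.trans hx.2)) hx))
  have hbound' := (ae_restrict_iff' measurableSet_Icc).1 hbound
  refine LipschitzOnWith.of_dist_le_mul fun x hx y hy => ?_
  rw [dist_eq_norm, hf x hx, hf y hy, add_sub_add_left_eq_sub,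
    intervalIntegral.integral_interval_sub_left (hint' x hx) (hint' y hy), Real.dist_eq]
  apply intervalIntegral.norm_integral_le_of_norm_le_const_ae
  filter_upwards [hbound'] with s hs hmem
  exact hs (uIcc_subset_Icc hy hx (uIoc_subset_uIcc hmem))

section Circle

variable {E : Type*} [NormedAddCommGroup E] [InnerProductSpace ℝ E]

noncomputable def unitSpeedCircle (c u v : E) (K x : ℝ) : E :=
  c + (K⁻¹ * cos (K * x)) • u + (K⁻¹ * sin (K * x)) • v

variable {c u v : E} {K : ℝ}

lemma hasDerivAt_unitSpeedCircle (hK : K ≠ 0) (x : ℝ) :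
    HasDerivAt (unitSpeedCircle c u v K) (-sin (K * x) • u + cos (K * x) • v) x := by
  have hcos := (((hasDerivAt_id' x).const_mul K).cos.const_mul K⁻¹).smul_const u
  have hsin := (((hasDerivAt_id' x).const_mul K).sin.const_mul K⁻¹).smul_const v
  refine ((hcos.const_add c).add hsin).congr_deriv ?_
  field_simp

lemma unitSpeedCircle_periodic (hK : K ≠ 0) : (unitSpeedCircle c u v K).Periodic (2 * π / K) := by
  intro x
  simp only [unitSpeedCircle, mul_add, mul_div_cancel₀ _ hK, cos_add_two_pi, sin_add_two_pi]

lemma unitSpeedCircle_injOn (hK : 0 < K) (hu : ‖u‖ = 1) (hv : ‖v‖ = 1) (huv : ⟪u, v⟫ = 0) :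
    InjOn (unitSpeedCircle c u v K) (Ico 0 (2 * π / K)) := by
  intro x hx y hy hxy
  simp only [unitSpeedCircle, add_assoc, add_right_inj] at hxy
  have hcoord : ∀ w : E, ⟪(K⁻¹ * cos (K * x)) • u + (K⁻¹ * sin (K * x)) • v, w⟫ =
      ⟪(K⁻¹ * cos (K * y)) • u + (K⁻¹ * sin (K * y)) • v, w⟫ := fun w => by rw [hxy]
  have hcos := hcoord u
  have hsin := hcoord v
  simp only [inner_add_left, real_inner_smul_left, real_inner_self_eq_norm_sq, hu, hv, huv,
    real_inner_comm u v, one_pow, mul_one, mul_zero, add_zero, zero_add,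
    mul_right_inj' (inv_ne_zero hK.ne')] at hcos hsin
  have hx' : K * x < 2 * π := (lt_div_iff₀' hK).1 hx.2
  have hy' : K * y < 2 * π := (lt_div_iff₀' hK).1 hy.2
  have hx₀ := mul_nonneg hK.le hx.1
  have hy₀ := mul_nonneg hK.le hy.1
  have hcos_sub : cos (K * x - K * y) = 1 := by
    rw [cos_sub, hcos, hsin]
    linear_combination cos_sq_add_sin_sq (K * y)
  rw [cos_eq_one_iff_of_lt_of_lt (by linarith) (by linarith), sub_eq_zero] at hcos_sub
  exact mul_left_cancel₀ hK.ne' hcos_sub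

lemma le_of_injOn_of_eqOn_unitSpeedCircle (hK : 0 < K) {γ : ℝ → E} {L : ℝ}
    (hinj : InjOn γ (Ico 0 L)) (hγ : EqOn γ (unitSpeedCircle c u v K) (Icc 0 L)) :
    L ≤ 2 * π / K := by
  by_contra! hlt
  have hperiod : 2 * π / K ∈ Ico 0 L := ⟨by positivity, hlt⟩
  have hloop : γ 0 = γ (2 * π / K) := by
    rw [hγ ⟨le_rfl, hperiod.1.trans hlt.le⟩, hγ (Ico_subset_Icc_self hperiod),
      ← zero_add (2 * π / K), unitSpeedCircle_periodic hK.ne']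
  exact (div_pos two_pi_pos hK).ne (hinj ⟨le_rfl, hperiod.1.trans_lt hlt⟩ hperiod hloop)

end Circle

namespace SphereCurve

variable {E : Type*} [NormedAddCommGroup E] [InnerProductSpace ℝ E] {U : ℝ → E} {K : ℝ≥0} {L : ℝ}

lemma pos_of_mul_eq_two_pi (hKL : K * L = 2 * π) : (0 : ℝ) < K ∧ 0 < L := by
  have hpos : (0 : ℝ) < K * L := hKL ▸ two_pi_pos
  exact ⟨pos_of_mul_pos_left hpos (le_of_lt (pos_of_mul_pos_right hpos K.2)),
    pos_of_mul_pos_right hpos K.2⟩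

lemma cos_le_inner_midpoint (hU : ∀ t ∈ Icc 0 L, ‖U t‖ = 1)
    (hlip : LipschitzOnWith K U (Icc 0 L)) (hKL : K * L ≤ 2 * π) {x : ℝ} (hx : x ∈ Icc 0 L) :
    cos (K * (x - L / 2)) ≤ ⟪U x, U (L / 2)⟫ := by
  have hmid : L / 2 ∈ Icc 0 L := ⟨by linarith [hx.1, hx.2], by linarith [hx.1, hx.2]⟩
  have hdist : |x - L / 2| ≤ L / 2 := abs_sub_le_iff.2 ⟨by linarith [hx.2], by linarith [hx.1]⟩
  rw [real_inner_comm]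
  refine cos_le_inner_of_lipschitzOnWith hU hlip hmid hx ?_
  nlinarith [mul_le_mul_of_nonneg_left hdist K.2]

lemma cos_le_inner_of_closed (hU : ∀ t ∈ Icc 0 L, ‖U t‖ = 1)
    (hlip : LipschitzOnWith K U (Icc 0 L)) (hKL : K * L = 2 * π) (hclosed : U 0 = U L)
    {x c : ℝ} (hx : x ∈ Icc 0 L) (hc : c ∈ Icc 0 L) : cos (K * (x - c)) ≤ ⟪U x, U c⟫ := by
  wlog hxc : x ≤ c generalizing x c
  · rw [real_inner_comm, ← cos_neg, ← mul_neg, neg_sub]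
    exact this hc hx (le_of_not_ge hxc)
  have hcos : cos (K * (x - c)) = cos (K * (c - x)) := by rw [← cos_neg, ← mul_neg, neg_sub]
  have hcx : |c - x| = c - x := abs_of_nonneg (sub_nonneg.2 hxc)
  rw [hcos]
  rcases le_total ((K : ℝ) * (c - x)) π with hπ | hπ
  · exact cos_le_inner_of_lipschitzOnWith hU hlip hx hc (by rwa [hcx])
  have h₀ : (0 : ℝ) ∈ Icc 0 L := ⟨le_rfl, hx.1.trans hx.2⟩
  have h₁ : L ∈ Icc 0 L := ⟨hx.1.trans hx.2, le_rfl⟩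
  -- the short way from `x` to `c` runs backwards through `0 ~ L`
  have hangle : angle (U x) (U c) ≤ 2 * π - K * (c - x) := calc
    angle (U x) (U c) ≤ angle (U x) (U 0) + angle (U L) (U c) := by
      simpa only [hclosed] using angle_le_angle_add_angle (U x) (U 0) (U c)
    _ ≤ K * |0 - x| + K * |c - L| :=
        add_le_add (angle_le_mul_abs_sub_of_lipschitzOnWith hU hlip hx h₀)
          (angle_le_mul_abs_sub_of_lipschitzOnWith hU hlip h₁ hc)
    _ = 2 * π - K * (c - x) := by
        rw [abs_of_nonpos (by linarith [hx.1]), abs_of_nonpos (by linarith [hc.2])]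
        linear_combination hKL
  rw [← cos_two_pi_sub]
  exact cos_le_inner_of_angle_le (hU x hx) (hU c hc) hangle (by linarith)

variable [CompleteSpace E]

lemma integral_inner_eq_zero (hL : 0 ≤ L) (hlip : LipschitzOnWith K U (Icc 0 L))
    (hmean : ∫ x in 0..L, U x = 0) (w : E) : ∫ x in 0..L, ⟪U x, w⟫ = 0 := by
  rw [intervalIntegral_inner_left (hlip.continuousOn.intervalIntegrable_of_Icc hL), hmean,
    inner_zero_left]

theorem two_pi_le_mul (hK : 0 < K) (hL : 0 < L) (hU : ∀ t ∈ Icc 0 L, ‖U t‖ = 1)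
    (hlip : LipschitzOnWith K U (Icc 0 L)) (hmean : ∫ x in 0..L, U x = 0) :
    2 * π ≤ K * L := by
  by_contra! hlt
  have hK' : (0 : ℝ) < K := hK
  have hmono := intervalIntegral.integral_mono_on hL.le
    (Continuous.intervalIntegrable (μ := volume) (by fun_prop) _ _)
    ((hlip.continuousOn.inner continuousOn_const).intervalIntegrable_of_Icc hL.le)
    fun x hx => cos_le_inner_midpoint hU hlip hlt.le hx
  rw [integral_cos_mul_sub hK'.ne', integral_inner_eq_zero hL.le hlip hmean,
    show (K : ℝ) * (0 - L / 2) = -(K * (L - L / 2)) by ring, sin_neg] at hmono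
  have hsin : 0 < sin (K * (L - L / 2)) :=
    sin_pos_of_pos_of_lt_pi (mul_pos hK' (by linarith)) (by linarith)
  have : 0 < (sin (K * (L - L / 2)) - -sin (K * (L - L / 2))) / K := by
    apply div_pos <;> linarith
  linarith

/-- Comparison with the midpoint forces `U 0 = -U (L / 2) = U L`. -/
lemma apply_zero_eq_of_mul_eq_two_pi (hU : ∀ t ∈ Icc 0 L, ‖U t‖ = 1)
    (hlip : LipschitzOnWith K U (Icc 0 L)) (hmean : ∫ x in 0..L, U x = 0)
    (hKL : K * L = 2 * π) : U 0 = U L := by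
  obtain ⟨hK, hL⟩ := pos_of_mul_eq_two_pi hKL
  have hmid : L / 2 ∈ Icc 0 L := ⟨by linarith, by linarith⟩
  have heq := eqOn_of_le_of_integral_le hL (hlip.continuousOn.inner continuousOn_const)
    (by fun_prop) (fun x hx => cos_le_inner_midpoint hU hlip hKL.le hx)
    (by rw [integral_inner_eq_zero hL.le hlip hmean, integral_cos_mul_sub hK.ne',
      show (K : ℝ) * (L - L / 2) = π by linarith, show (K : ℝ) * (0 - L / 2) = -π by linarith,
      sin_neg, sin_pi, neg_zero, sub_zero, zero_div])
  have h₀ := heq (left_mem_Icc.2 hL.le)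
  have h₁ := heq (right_mem_Icc.2 hL.le)
  simp only at h₀ h₁
  rw [show (K : ℝ) * (0 - L / 2) = -π by linarith, cos_neg, cos_pi,
    inner_eq_neg_one_iff_of_norm_eq_one (hU 0 (left_mem_Icc.2 hL.le)) (hU _ hmid)] at h₀
  rw [show (K : ℝ) * (L - L / 2) = π by linarith, cos_pi,
    inner_eq_neg_one_iff_of_norm_eq_one (hU L (right_mem_Icc.2 hL.le)) (hU _ hmid)] at h₁
  rw [h₀, h₁]

theorem inner_eq_cos (hU : ∀ t ∈ Icc 0 L, ‖U t‖ = 1)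
    (hlip : LipschitzOnWith K U (Icc 0 L)) (hmean : ∫ x in 0..L, U x = 0)
    (hKL : K * L = 2 * π) {x c : ℝ} (hx : x ∈ Icc 0 L) (hc : c ∈ Icc 0 L) :
    ⟪U x, U c⟫ = cos (K * (x - c)) := by
  obtain ⟨hK, hL⟩ := pos_of_mul_eq_two_pi hKL
  refine eqOn_of_le_of_integral_le hL (hlip.continuousOn.inner continuousOn_const)
    (by fun_prop) (fun y hy => cos_le_inner_of_closed hU hlip hKL
      (apply_zero_eq_of_mul_eq_two_pi hU hlip hmean hKL) hy hc) ?_ hx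
  rw [integral_inner_eq_zero hL.le hlip hmean, integral_cos_mul_sub hK.ne',
    show (K : ℝ) * (L - c) = 2 * π - K * c by linear_combination hKL, sin_two_pi_sub,
    zero_sub, mul_neg, sin_neg, sub_neg_eq_add, neg_add_cancel, zero_div]

lemma inner_zero_quarter (hU : ∀ t ∈ Icc 0 L, ‖U t‖ = 1)
    (hlip : LipschitzOnWith K U (Icc 0 L)) (hmean : ∫ x in 0..L, U x = 0)
    (hKL : K * L = 2 * π) : ⟪U 0, U (L / 4)⟫ = 0 := by
  obtain ⟨-, hL⟩ := pos_of_mul_eq_two_pi hKL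
  rw [inner_eq_cos hU hlip hmean hKL ⟨le_rfl, hL.le⟩ ⟨by linarith, by linarith⟩,
    show (K : ℝ) * (0 - L / 4) = -(π / 2) by linear_combination (-1 / 4 : ℝ) * hKL, cos_neg,
    cos_pi_div_two]

theorem eq_cos_smul_add_sin_smul (hU : ∀ t ∈ Icc 0 L, ‖U t‖ = 1)
    (hlip : LipschitzOnWith K U (Icc 0 L)) (hmean : ∫ x in 0..L, U x = 0)
    (hKL : K * L = 2 * π) {x : ℝ} (hx : x ∈ Icc 0 L) :
    U x = cos (K * x) • U 0 + sin (K * x) • U (L / 4) := by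
  obtain ⟨-, hL⟩ := pos_of_mul_eq_two_pi hKL
  have h₀ : (0 : ℝ) ∈ Icc 0 L := ⟨le_rfl, hL.le⟩
  have hq : L / 4 ∈ Icc 0 L := ⟨by linarith, by linarith⟩
  have hquarter : ∀ y : ℝ, (K : ℝ) * (y - L / 4) = K * y - π / 2 := fun y => by
    linear_combination (-1 / 4 : ℝ) * hKL
  refine eq_smul_add_smul_of_inner_eq (hU x hx) (hU 0 h₀) (hU _ hq)
    (inner_zero_quarter hU hlip hmean hKL) (cos_sq_add_sin_sq _) ?_ ?_
  · rw [inner_eq_cos hU hlip hmean hKL hx h₀, sub_zero]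
  · rw [inner_eq_cos hU hlip hmean hKL hx hq, hquarter, cos_sub_pi_div_two]

theorem eqOn_unitSpeedCircle {γ : ℝ → E} (hγ : ∀ x ∈ Icc 0 L, HasDerivAt γ (U x) x)
    (hU : ∀ t ∈ Icc 0 L, ‖U t‖ = 1) (hlip : LipschitzOnWith K U (Icc 0 L))
    (hmean : ∫ x in 0..L, U x = 0) (hKL : K * L = 2 * π) :
    EqOn γ (unitSpeedCircle (γ 0 + (K : ℝ)⁻¹ • U (L / 4)) (-U (L / 4)) (U 0) K) (Icc 0 L) := by
  obtain ⟨hK, -⟩ := pos_of_mul_eq_two_pi hKL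
  refine fun x hx => eq_of_has_deriv_right_eq
    (fun y hy => (hγ y (Ico_subset_Icc_self hy)).hasDerivWithinAt) (fun y hy => ?_)
    (fun y hy => (hγ y hy).continuousAt.continuousWithinAt)
    (fun y _ => (hasDerivAt_unitSpeedCircle hK.ne' y).continuousAt.continuousWithinAt) ?_ x hx
  · refine ((hasDerivAt_unitSpeedCircle hK.ne' y).congr_deriv ?_).hasDerivWithinAt
    rw [eq_cos_smul_add_sin_smul hU hlip hmean hKL (Ico_subset_Icc_self hy)]
    module
  · simp only [unitSpeedCircle, mul_zero, cos_zero, sin_zero, mul_one]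
    module

theorem exists_unitSpeedCircle {γ : ℝ → E} (hγ : ∀ x ∈ Icc 0 L, HasDerivAt γ (U x) x)
    (hU : ∀ t ∈ Icc 0 L, ‖U t‖ = 1) (hlip : LipschitzOnWith K U (Icc 0 L))
    (hmean : ∫ x in 0..L, U x = 0) (hKL : K * L = 2 * π) :
    ∃ c u v : E, ‖u‖ = 1 ∧ ‖v‖ = 1 ∧ ⟪u, v⟫ = 0 ∧ InjOn γ (Ico 0 L) ∧
      EqOn γ (unitSpeedCircle c u v K) (Icc 0 L) := by
  obtain ⟨hK, hL⟩ := pos_of_mul_eq_two_pi hKL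
  have hu : ‖-U (L / 4)‖ = 1 := (norm_neg _).trans (hU _ ⟨by linarith, by linarith⟩)
  have hv : ‖U 0‖ = 1 := hU 0 ⟨le_rfl, hL.le⟩
  have huv : ⟪-U (L / 4), U 0⟫ = 0 := by
    rw [inner_neg_left, real_inner_comm, inner_zero_quarter hU hlip hmean hKL, neg_zero]
  have hcircle := eqOn_unitSpeedCircle hγ hU hlip hmean hKL
  refine ⟨_, _, _, hu, hv, huv, InjOn.congr ((unitSpeedCircle_injOn hK hu hv huv).mono ?_)
    (hcircle.mono Ico_subset_Icc_self).symm, hcircle⟩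
  rw [← hKL, mul_div_cancel_left₀ _ hK.ne']

end SphereCurve

/-- **Shortest arc of constant curvature.**
Let `γ ∈ H²([0,L], ℝ³)`, `L > 0`, be parametrized by arclength (`|γ'| ≡ 1`, with `γ'`
absolutely continuous with a.e. derivative `γ''`), with constant curvature `|γ''| = 4π` a.e.
and coinciding endpoints `γ(0) = γ(L)`.  Then `L ≥ 1/2`, with equality if and only if `γ`
is a (once-covered) round circle of radius `1/(4π)`. -/
theorem stmt_5 (L : ℝ) (hL : 0 < L)
    (γ γ' γ'' : ℝ → EuclideanSpace ℝ (Fin 3))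
    (hd1 : ∀ x ∈ Icc (0:ℝ) L, HasDerivAt γ (γ' x) x)
    (harc : ∀ x ∈ Icc (0:ℝ) L, ‖γ' x‖ = 1)
    (hac : ∀ x ∈ Icc (0:ℝ) L, γ' x = γ' 0 + ∫ s in (0:ℝ)..x, γ'' s)
    (hint : IntegrableOn γ'' (Icc (0:ℝ) L))
    (hcurv : ∀ᵐ x ∂(volume.restrict (Icc (0:ℝ) L)), ‖γ'' x‖ = 4 * π)
    (hclosed : γ 0 = γ L) :
    1/2 ≤ L ∧
    (L = 1/2 ↔ ∃ (c u v : EuclideanSpace ℝ (Fin 3)),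
      ‖u‖ = 1 ∧ ‖v‖ = 1 ∧ ⟪u, v⟫ = 0 ∧ Set.InjOn γ (Ico (0:ℝ) L) ∧
      ∀ x ∈ Icc (0:ℝ) L,
        γ x = c + ((4*π)⁻¹ * Real.cos (4*π*x)) • u + ((4*π)⁻¹ * Real.sin (4*π*x)) • v) := by
  set K : ℝ≥0 := ⟨4 * π, by positivity⟩
  have hK : (K : ℝ) = 4 * π := rfl
  have hlip : LipschitzOnWith K γ' (Icc 0 L) :=
    lipschitzOnWith_of_eq_add_integral hac hint (hcurv.mono fun x hx => hx.le)
  have hmean : ∫ x in 0..L, γ' x = 0 := by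
    rw [intervalIntegral.integral_eq_sub_of_hasDerivAt (fun x hx => hd1 x (uIcc_of_le hL.le ▸ hx))
      (hlip.continuousOn.intervalIntegrable_of_Icc hL.le), hclosed, sub_self]
  have hlength : 1 / 2 ≤ L := by
    have := SphereCurve.two_pi_le_mul (NNReal.coe_pos.1 (by rw [hK]; positivity)) hL harc hlip hmean
    rw [hK] at this
    nlinarith [pi_pos]
  have hperiod : 2 * π / (4 * π) = 1 / 2 := by field_simp; norm_num
  refine ⟨hlength, fun hL₂ => ?_, fun ⟨c, u, v, _, _, _, hinj, hcircle⟩ => ?_⟩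
  · obtain ⟨c, u, v, hu, hv, huv, hinj, hcircle⟩ :=
      SphereCurve.exists_unitSpeedCircle hd1 harc hlip hmean (by rw [hK, hL₂]; ring)
    exact ⟨c, u, v, hu, hv, huv, hinj, fun x hx => hcircle hx⟩
  · exact le_antisymm
      (hperiod ▸ le_of_injOn_of_eqOn_unitSpeedCircle (by positivity) hinj hcircle) hlength
end

section
/- For coprime integers a ≥ 2, b ≥ 2 there exist constants C > 0 and ρ₀ > 0 (depending only on a, b) such that for all ρ ∈ (0, ρ₀]: (i) the length satisfies |𝓛(τ_ρ) − 2πa| ≤ Cρ², and (ii) the bending energy satisfies E_bend(τ_ρ) ≤ 2πa + Cρ², where E_bend(γ) = ∫ κ² ds = ∫₀^{2π} |γ'' ∧ γ'|²/|γ'|⁵ dt. Consequently the rescaled arclength-parametrized unit-length curve τ̃_ρ satisfies E_bend(τ̃_ρ) ≤ (2πa)² + C'ρ² for a constant C' = C'(a,b). -/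
open Real Set

/-- The standard `(a,b)`-torus curve on the torus with core radius `1` and tube radius `ρ`. -/
noncomputable def torusCurve (a b : ℤ) (ρ : ℝ) (t : ℝ) : EuclideanSpace ℝ (Fin 3) :=
  (WithLp.equiv 2 (Fin 3 → ℝ)).symm
    ![(1 + ρ * Real.cos (b * t)) * Real.cos (a * t),
      (1 + ρ * Real.cos (b * t)) * Real.sin (a * t),
      ρ * Real.sin (b * t)]

/-- Cross product on `ℝ³` (as `EuclideanSpace ℝ (Fin 3)`). -/
noncomputable def cross3 (u v : EuclideanSpace ℝ (Fin 3)) : EuclideanSpace ℝ (Fin 3) :=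
  (WithLp.equiv 2 (Fin 3 → ℝ)).symm
    (crossProduct ((WithLp.equiv 2 (Fin 3 → ℝ)) u) ((WithLp.equiv 2 (Fin 3 → ℝ)) v))

/-- Length of a closed curve parametrized over `[0, 2π]`. -/
noncomputable def curveLength (γ : ℝ → EuclideanSpace ℝ (Fin 3)) : ℝ :=
  ∫ t in (0:ℝ)..(2*π), ‖deriv γ t‖

/-- Bending energy `∫ κ² ds = ∫₀^{2π} |γ'' ∧ γ'|²/|γ'|⁵ dt` of a closed curve over `[0, 2π]`. -/
noncomputable def bendingEnergy (γ : ℝ → EuclideanSpace ℝ (Fin 3)) : ℝ :=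
  ∫ t in (0:ℝ)..(2*π), ‖cross3 (deriv (deriv γ) t) (deriv γ t)‖^2 / ‖deriv γ t‖^5

/-! In the frame `(e_r, e_θ, e_z)` rotating with angle `a t`, a curve `R e_r + Z e_z` has velocity
`(R', a R, Z')` and acceleration `(R'' - a² R, 2 a R', Z'')`. For `τ_ρ`, with `R = 1 + ρ cos bt` and
`Z = ρ sin bt`, this gives `|τ'|² = a² R² + ρ² b²`, hence `a R ≤ |τ'| ≤ a R + ρ² b² / a`, and
`|τ'' ∧ τ'|² / |τ'|⁵ ≤ |τ''|² / |τ'|³ ≤ a + ρ (2b²/a - a) cos bt + O(ρ²)`. The terms of order `ρ`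
are multiples of `cos bt`, which integrate to zero over `[0, 2π]`, so only `O(ρ²)` errors remain;
the bound on `𝓛 · E_bend` is the product of the other two. -/

-- `u e_r + v e_θ + w e_z` in the frame rotating with angle `A t`
noncomputable def cylFrame (A u v w t : ℝ) : EuclideanSpace ℝ (Fin 3) :=
  WithLp.toLp 2 ![u * cos (A * t) - v * sin (A * t), u * sin (A * t) + v * cos (A * t), w]

lemma norm_cylFrame_sq (A u v w t : ℝ) : ‖cylFrame A u v w t‖ ^ 2 = u ^ 2 + v ^ 2 + w ^ 2 := by
  rw [EuclideanSpace.real_norm_sq_eq]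
  simp only [cylFrame, Fin.sum_univ_three, Fin.isValue, Matrix.cons_val_zero, Matrix.cons_val_one,
    Matrix.cons_val, add_left_inj]
  linear_combination (u ^ 2 + v ^ 2) * cos_sq_add_sin_sq (A * t)

lemma hasDerivAt_cylFrame (A : ℝ) {u v w : ℝ → ℝ} {u' v' w' t : ℝ} (hu : HasDerivAt u u' t)
    (hv : HasDerivAt v v' t) (hw : HasDerivAt w w' t) :
    HasDerivAt (fun s => cylFrame A (u s) (v s) (w s) s)
      (cylFrame A (u' - A * v t) (v' + A * u t) w' t) t := by
  have hc : HasDerivAt (fun s => cos (A * s)) (-sin (A * t) * A) t := by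
    simpa using ((hasDerivAt_id t).const_mul A).cos
  have hs : HasDerivAt (fun s => sin (A * s)) (cos (A * t) * A) t := by
    simpa using ((hasDerivAt_id t).const_mul A).sin
  refine (PiLp.continuousLinearEquiv 2 ℝ (fun _ : Fin 3 => ℝ)).symm.hasFDerivAt.comp_hasDerivAt t
    (hasDerivAt_pi.2 fun i => ?_)
  fin_cases i
  · exact ((hu.mul hc).sub (hv.mul hs)).congr_deriv
      (by simp only [Fin.zero_eta, Matrix.cons_val_zero]; ring)
  · exact ((hu.mul hs).add (hv.mul hc)).congr_deriv
      (by simp only [Fin.mk_one, Matrix.cons_val_zero, Matrix.cons_val_one]; ring)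
  · simpa using hw

lemma continuous_cylFrame (A : ℝ) {u v w : ℝ → ℝ} (hu : Continuous u) (hv : Continuous v)
    (hw : Continuous w) : Continuous fun t => cylFrame A (u t) (v t) (w t) t := by
  unfold cylFrame
  fun_prop

lemma norm_cross3_sq_le (u v : EuclideanSpace ℝ (Fin 3)) :
    ‖cross3 u v‖ ^ 2 ≤ ‖u‖ ^ 2 * ‖v‖ ^ 2 := by
  simp only [EuclideanSpace.real_norm_sq_eq, cross3, WithLp.equiv_apply, WithLp.equiv_symm_apply,
    cross_apply, Fin.isValue, Fin.sum_univ_three, Matrix.cons_val_zero, Matrix.cons_val_one,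
    Matrix.cons_val]
  -- Lagrange's identity: `‖u × v‖² = ‖u‖² ‖v‖² - ⟪u, v⟫²`
  nlinarith [sq_nonneg (u 0 * v 0 + u 1 * v 1 + u 2 * v 2)]

lemma norm_cross3_sq_div_pow_five_le (u v : EuclideanSpace ℝ (Fin 3)) :
    ‖cross3 u v‖ ^ 2 / ‖v‖ ^ 5 ≤ ‖u‖ ^ 2 / ‖v‖ ^ 3 := by
  rcases (norm_nonneg v).eq_or_lt with hv | hv
  · simp [← hv]
  calc ‖cross3 u v‖ ^ 2 / ‖v‖ ^ 5 ≤ ‖u‖ ^ 2 * ‖v‖ ^ 2 / ‖v‖ ^ 5 := by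
        gcongr; exact norm_cross3_sq_le u v
    _ = ‖u‖ ^ 2 / ‖v‖ ^ 3 := by field_simp

lemma hasDerivAt_mul_cos_mul (c k t : ℝ) :
    HasDerivAt (fun s => c * cos (k * s)) (-(c * k * sin (k * t))) t := by
  have h := (((hasDerivAt_id t).const_mul k).cos).const_mul c
  simp only [id, mul_one] at h
  exact h.congr_deriv (by ring)

lemma hasDerivAt_mul_sin_mul (c k t : ℝ) :
    HasDerivAt (fun s => c * sin (k * s)) (c * k * cos (k * t)) t := by
  have h := (((hasDerivAt_id t).const_mul k).sin).const_mul c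
  simp only [id, mul_one] at h
  exact h.congr_deriv (by ring)

lemma torusCurve_eq_cylFrame (a b : ℤ) (ρ : ℝ) :
    torusCurve a b ρ = fun t => cylFrame a (1 + ρ * cos (b * t)) 0 (ρ * sin (b * t)) t := by
  funext t
  ext i
  fin_cases i <;> simp [torusCurve, cylFrame]

lemma deriv_torusCurve (a b : ℤ) (ρ : ℝ) :
    deriv (torusCurve a b ρ) = fun t =>
      cylFrame a (-(ρ * b * sin (b * t))) (a * (1 + ρ * cos (b * t))) (ρ * b * cos (b * t)) t := by
  funext t
  rw [torusCurve_eq_cylFrame]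
  refine (hasDerivAt_cylFrame a ((hasDerivAt_mul_cos_mul ρ b t).const_add 1)
    (hasDerivAt_const t 0) (hasDerivAt_mul_sin_mul ρ b t)).deriv.trans ?_
  simp

lemma deriv_deriv_torusCurve (a b : ℤ) (ρ : ℝ) :
    deriv (deriv (torusCurve a b ρ)) = fun t =>
      cylFrame a (-(ρ * b ^ 2 * cos (b * t)) - a ^ 2 * (1 + ρ * cos (b * t)))
        (-(2 * a * ρ * b * sin (b * t))) (-(ρ * b ^ 2 * sin (b * t))) t := by
  funext t
  rw [deriv_torusCurve]
  have hu : HasDerivAt (fun s => -(ρ * b * sin (b * s))) (-(ρ * b * b * cos (b * t))) t :=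
    (hasDerivAt_mul_sin_mul (ρ * b) b t).neg
  have hv : HasDerivAt (fun s => a * (1 + ρ * cos (b * s))) (a * -(ρ * b * sin (b * t))) t :=
    ((hasDerivAt_mul_cos_mul ρ b t).const_add 1).const_mul _
  refine (hasDerivAt_cylFrame a hu hv (hasDerivAt_mul_cos_mul (ρ * b) b t)).deriv.trans ?_
  congr 1 <;> ring

lemma norm_deriv_torusCurve_sq (a b : ℤ) (ρ t : ℝ) :
    ‖deriv (torusCurve a b ρ) t‖ ^ 2 = (a * (1 + ρ * cos (b * t))) ^ 2 + ρ ^ 2 * b ^ 2 := by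
  rw [deriv_torusCurve, norm_cylFrame_sq]
  linear_combination ρ ^ 2 * b ^ 2 * sin_sq_add_cos_sq (b * t)

lemma norm_deriv_deriv_torusCurve_sq_le (a b : ℤ) (ρ t : ℝ) :
    ‖deriv (deriv (torusCurve a b ρ)) t‖ ^ 2 ≤
      (a ^ 2 * (1 + ρ * cos (b * t)) + ρ * b ^ 2 * cos (b * t)) ^ 2
        + ρ ^ 2 * b ^ 2 * (4 * a ^ 2 + b ^ 2) := by
  rw [deriv_deriv_torusCurve, norm_cylFrame_sq]
  have hs : sin (b * t) ^ 2 ≤ 1 := sin_sq_le_one _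
  nlinarith [mul_le_mul_of_nonneg_left hs
    (by positivity : (0 : ℝ) ≤ ρ ^ 2 * b ^ 2 * (4 * a ^ 2 + b ^ 2))]

lemma continuous_norm_deriv_torusCurve (a b : ℤ) (ρ : ℝ) :
    Continuous fun t => ‖deriv (torusCurve a b ρ) t‖ := by
  rw [deriv_torusCurve]
  exact (continuous_cylFrame _ (by fun_prop) (by fun_prop) (by fun_prop)).norm

lemma mul_le_norm_deriv_torusCurve (a b : ℤ) (ρ t : ℝ) :
    a * (1 + ρ * cos (b * t)) ≤ ‖deriv (torusCurve a b ρ) t‖ :=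
  le_of_sq_le_sq (by rw [norm_deriv_torusCurve_sq]; nlinarith [sq_nonneg (ρ * b)]) (norm_nonneg _)

lemma half_le_one_add_mul {ρ c : ℝ} (hρ : |ρ| ≤ 1 / 2) (hc : |c| ≤ 1) : 1 / 2 ≤ 1 + ρ * c := by
  have : |ρ * c| ≤ 1 / 2 := by
    rw [abs_mul]; nlinarith [abs_nonneg ρ, abs_nonneg c]
  linarith [neg_abs_le (ρ * c)]

lemma norm_deriv_torusCurve_le {a : ℤ} (ha : 0 < a) (b : ℤ) {ρ : ℝ} (hρ : |ρ| ≤ 1 / 2) (t : ℝ) :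
    ‖deriv (torusCurve a b ρ) t‖ ≤ a * (1 + ρ * cos (b * t)) + b ^ 2 / a * ρ ^ 2 := by
  have hA : (0 : ℝ) < a := by exact_mod_cast ha
  have hr := half_le_one_add_mul hρ (abs_cos_le_one (b * t))
  refine (sq_le_sq₀ (norm_nonneg _) (by positivity)).1 ?_
  rw [norm_deriv_torusCurve_sq]
  have e : (a * (1 + ρ * cos (b * t)) + b ^ 2 / a * ρ ^ 2) ^ 2
      = (a * (1 + ρ * cos (b * t))) ^ 2 + 2 * (1 + ρ * cos (b * t)) * ρ ^ 2 * b ^ 2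
        + (b ^ 2 / a * ρ ^ 2) ^ 2 := by
    field_simp; ring
  rw [e]
  nlinarith [mul_le_mul_of_nonneg_right hr (by positivity : (0 : ℝ) ≤ 2 * ρ ^ 2 * b ^ 2),
    sq_nonneg (b ^ 2 / a * ρ ^ 2)]

noncomputable def torusEnergyConst (A B : ℝ) : ℝ := 2 * A + 16 * B ^ 2 * (2 * A ^ 2 + B ^ 2) / A ^ 3

lemma curvature_density_le {A B ρ c : ℝ} (hA : 0 < A) (hρ : |ρ| ≤ 1 / 2) (hc : |c| ≤ 1) :
    ((A ^ 2 * (1 + ρ * c) + ρ * B ^ 2 * c) ^ 2 + ρ ^ 2 * B ^ 2 * (4 * A ^ 2 + B ^ 2))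
        / (A * (1 + ρ * c)) ^ 3
      ≤ A + ρ * (2 * B ^ 2 / A - A) * c + torusEnergyConst A B * ρ ^ 2 := by
  set r := 1 + ρ * c
  have hr2 : 1 / 2 ≤ r := half_le_one_add_mul hρ hc
  have hr0 : 0 < r := by linarith
  have hc2 : c ^ 2 ≤ 1 := by rw [← sq_abs]; nlinarith [abs_nonneg c]
  have hsplit : ((A ^ 2 * r + ρ * B ^ 2 * c) ^ 2 + ρ ^ 2 * B ^ 2 * (4 * A ^ 2 + B ^ 2)) / (A * r) ^ 3
      = A / r + 2 * ρ * B ^ 2 * c / (A * r ^ 2)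
        + ρ ^ 2 * (B ^ 4 * c ^ 2 + B ^ 2 * (4 * A ^ 2 + B ^ 2)) / (A ^ 3 * r ^ 3) := by
    field_simp; ring
  -- `1/r = 1 - ρc + (ρc)²/r`
  have h1 : A / r ≤ A - A * ρ * c + 2 * A * ρ ^ 2 := by
    rw [div_le_iff₀ hr0]
    nlinarith [mul_le_mul_of_nonneg_left hc2 (by positivity : 0 ≤ A * ρ ^ 2),
      mul_le_mul_of_nonneg_left hr2 (by positivity : 0 ≤ 2 * A * ρ ^ 2)]
  -- the difference is `-2ρ²B²c²(2 + ρc)/(Ar²) ≤ 0`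
  have h2 : 2 * ρ * B ^ 2 * c / (A * r ^ 2) ≤ 2 * ρ * B ^ 2 * c / A := by
    rw [div_le_div_iff₀ (by positivity) hA]
    have : 0 ≤ 2 * ρ ^ 2 * B ^ 2 * c ^ 2 * A * (r + 1) := by positivity
    nlinarith
  have h3 : ρ ^ 2 * (B ^ 4 * c ^ 2 + B ^ 2 * (4 * A ^ 2 + B ^ 2)) / (A ^ 3 * r ^ 3)
      ≤ 16 * B ^ 2 * (2 * A ^ 2 + B ^ 2) / A ^ 3 * ρ ^ 2 := by
    rw [div_le_iff₀ (by positivity)]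
    have hr3 : 1 / 8 ≤ r ^ 3 := by nlinarith [pow_le_pow_left₀ (by norm_num) hr2 3]
    have hB : B ^ 4 * c ^ 2 ≤ B ^ 4 := by nlinarith [sq_nonneg (B ^ 2)]
    have key : ρ ^ 2 * (B ^ 4 * c ^ 2 + B ^ 2 * (4 * A ^ 2 + B ^ 2))
        ≤ 16 * B ^ 2 * (2 * A ^ 2 + B ^ 2) * ρ ^ 2 * (1 / 8) := by
      nlinarith [sq_nonneg ρ, sq_nonneg B]
    calc _ ≤ 16 * B ^ 2 * (2 * A ^ 2 + B ^ 2) * ρ ^ 2 * (1 / 8) := key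
      _ ≤ 16 * B ^ 2 * (2 * A ^ 2 + B ^ 2) * ρ ^ 2 * r ^ 3 := by gcongr
      _ = _ := by field_simp
  rw [hsplit, torusEnergyConst]
  have e : 2 * ρ * B ^ 2 * c / A = ρ * (2 * B ^ 2 / A) * c := by ring
  linarith [h1, h2, h3, e]

theorem intervalIntegral.integral_mono_of_nonneg {f g : ℝ → ℝ} {a b : ℝ} (hab : a ≤ b)
    (hf : ∀ t, 0 ≤ f t) (hg : IntervalIntegrable g MeasureTheory.volume a b)
    (h : ∀ t, f t ≤ g t) : ∫ t in a..b, f t ≤ ∫ t in a..b, g t := by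
  rw [intervalIntegral.integral_of_le hab, intervalIntegral.integral_of_le hab]
  exact MeasureTheory.integral_mono_of_nonneg (.of_forall hf) hg.1 (.of_forall h)

lemma integral_cos_int_mul (n : ℤ) (hn : n ≠ 0) : ∫ t in (0 : ℝ)..(2 * π), cos (n * t) = 0 := by
  have hn' : (n : ℝ) ≠ 0 := by exact_mod_cast hn
  rw [intervalIntegral.integral_comp_mul_left (fun t => cos t) hn', integral_cos,
    show (n : ℝ) * (2 * π) = ((2 * n : ℤ) : ℝ) * π by push_cast; ring, sin_int_mul_pi]
  simp

lemma integral_add_mul_cos_int_mul (α β : ℝ) (n : ℤ) (hn : n ≠ 0) :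
    ∫ t in (0 : ℝ)..(2 * π), (α + β * cos (n * t)) = 2 * π * α := by
  have hcos : IntervalIntegrable (fun t => β * cos (n * t)) MeasureTheory.volume 0 (2 * π) :=
    (by fun_prop : Continuous fun t : ℝ => β * cos (n * t)).intervalIntegrable _ _
  rw [intervalIntegral.integral_add intervalIntegrable_const hcos,
    intervalIntegral.integral_const_mul, integral_cos_int_mul n hn]
  simp

lemma two_pi_mul_le_curveLength (a : ℤ) {b : ℤ} (hb : b ≠ 0) (ρ : ℝ) :
    2 * π * a ≤ curveLength (torusCurve a b ρ) := by
  calc 2 * π * a = ∫ t in (0 : ℝ)..(2 * π), (a + a * ρ * cos (b * t)) :=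
        (integral_add_mul_cos_int_mul _ _ b hb).symm
    _ ≤ curveLength (torusCurve a b ρ) :=
        intervalIntegral.integral_mono (by positivity) ((by fun_prop : Continuous fun t : ℝ =>
          (a : ℝ) + a * ρ * cos (b * t)).intervalIntegrable _ _)
          ((continuous_norm_deriv_torusCurve a b ρ).intervalIntegrable _ _)
          fun t => by linarith [mul_le_norm_deriv_torusCurve a b ρ t]

lemma curveLength_torusCurve_le {a b : ℤ} (ha : 0 < a) (hb : b ≠ 0) {ρ : ℝ} (hρ : |ρ| ≤ 1 / 2) :
    curveLength (torusCurve a b ρ) ≤ 2 * π * a + 2 * π * (b ^ 2 / a) * ρ ^ 2 := by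
  calc curveLength (torusCurve a b ρ)
      ≤ ∫ t in (0 : ℝ)..(2 * π), ((a + b ^ 2 / a * ρ ^ 2) + a * ρ * cos (b * t)) :=
        intervalIntegral.integral_mono (by positivity)
          ((continuous_norm_deriv_torusCurve a b ρ).intervalIntegrable _ _)
          ((by fun_prop : Continuous fun t : ℝ =>
            ((a : ℝ) + b ^ 2 / a * ρ ^ 2) + a * ρ * cos (b * t)).intervalIntegrable _ _)
          fun t => by linarith [norm_deriv_torusCurve_le ha b hρ t]
    _ = 2 * π * a + 2 * π * (b ^ 2 / a) * ρ ^ 2 := by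
        rw [integral_add_mul_cos_int_mul _ _ b hb]; ring

lemma bendingEnergy_nonneg (γ : ℝ → EuclideanSpace ℝ (Fin 3)) : 0 ≤ bendingEnergy γ :=
  intervalIntegral.integral_nonneg (by positivity) fun _ _ => by positivity

lemma bendingEnergy_torusCurve_le {a b : ℤ} (ha : 0 < a) (hb : b ≠ 0) {ρ : ℝ} (hρ : |ρ| ≤ 1 / 2) :
    bendingEnergy (torusCurve a b ρ) ≤ 2 * π * a + 2 * π * torusEnergyConst a b * ρ ^ 2 := by
  have hA : (0 : ℝ) < a := by exact_mod_cast ha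
  have density (t : ℝ) :
      ‖cross3 (deriv (deriv (torusCurve a b ρ)) t) (deriv (torusCurve a b ρ) t)‖ ^ 2
          / ‖deriv (torusCurve a b ρ) t‖ ^ 5
        ≤ (a + torusEnergyConst a b * ρ ^ 2) + ρ * (2 * b ^ 2 / a - a) * cos (b * t) := by
    have hr := half_le_one_add_mul hρ (abs_cos_le_one (b * t))
    calc _ ≤ ‖deriv (deriv (torusCurve a b ρ)) t‖ ^ 2 / ‖deriv (torusCurve a b ρ) t‖ ^ 3 :=
          norm_cross3_sq_div_pow_five_le _ _
      _ ≤ ((a ^ 2 * (1 + ρ * cos (b * t)) + ρ * b ^ 2 * cos (b * t)) ^ 2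
            + ρ ^ 2 * b ^ 2 * (4 * a ^ 2 + b ^ 2)) / (a * (1 + ρ * cos (b * t))) ^ 3 := by
          gcongr
          · exact norm_deriv_deriv_torusCurve_sq_le a b ρ t
          · exact mul_le_norm_deriv_torusCurve a b ρ t
      _ ≤ _ := by
          linarith [curvature_density_le (B := b) hA hρ (abs_cos_le_one (b * t))]
  calc bendingEnergy (torusCurve a b ρ)
      ≤ ∫ t in (0 : ℝ)..(2 * π),
          ((a + torusEnergyConst a b * ρ ^ 2) + ρ * (2 * b ^ 2 / a - a) * cos (b * t)) :=
        intervalIntegral.integral_mono_of_nonneg (by positivity) (fun _ => by positivity)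
          ((by fun_prop : Continuous fun t : ℝ => ((a : ℝ) + torusEnergyConst a b * ρ ^ 2)
            + ρ * (2 * b ^ 2 / a - a) * cos (b * t)).intervalIntegrable _ _) density
    _ = 2 * π * a + 2 * π * torusEnergyConst a b * ρ ^ 2 := by
        rw [integral_add_mul_cos_int_mul _ _ b hb]; ring

theorem stmt_10_general (a b : ℤ) (ha : 2 ≤ a) (hb : 2 ≤ b) :
    ∃ C C' ρ₀ : ℝ, 0 < C ∧ 0 < C' ∧ 0 < ρ₀ ∧
      ∀ ρ ∈ Ioc (0:ℝ) ρ₀,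
        |curveLength (torusCurve a b ρ) - 2*π*a| ≤ C * ρ^2 ∧
        bendingEnergy (torusCurve a b ρ) ≤ 2*π*a + C * ρ^2 ∧
        curveLength (torusCurve a b ρ) * bendingEnergy (torusCurve a b ρ)
          ≤ (2*π*a)^2 + C' * ρ^2 := by
  have ha₀ : 0 < a := by omega
  have hb₀ : b ≠ 0 := by omega
  have hK : 0 < torusEnergyConst a b := by unfold torusEnergyConst; positivity
  obtain ⟨C, hC⟩ : ∃ C : ℝ, C = 2 * π * (b ^ 2 / a) + 2 * π * torusEnergyConst a b := ⟨_, rfl⟩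
  have hC₀ : 0 < C := by rw [hC]; positivity
  refine ⟨C, C * (4 * π * a + C), 1 / 2, hC₀, by positivity, by norm_num, fun ρ hρ => ?_⟩
  have hρ' : |ρ| ≤ 1 / 2 := abs_le.2 ⟨by linarith [hρ.1], hρ.2⟩
  have hρ2 : ρ ^ 2 ≤ 1 := by nlinarith [hρ.1, hρ.2]
  have hCρ : C * ρ ^ 2 = 2 * π * (b ^ 2 / a) * ρ ^ 2 + 2 * π * torusEnergyConst a b * ρ ^ 2 := by
    rw [hC]; ring
  have hL₀ := two_pi_mul_le_curveLength a hb₀ ρ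
  have hL : curveLength (torusCurve a b ρ) ≤ 2 * π * a + C * ρ ^ 2 := by
    linarith [curveLength_torusCurve_le ha₀ hb₀ hρ', (by positivity :
      0 ≤ 2 * π * torusEnergyConst a b * ρ ^ 2)]
  have hE : bendingEnergy (torusCurve a b ρ) ≤ 2 * π * a + C * ρ ^ 2 := by
    linarith [bendingEnergy_torusCurve_le ha₀ hb₀ hρ', (by positivity :
      0 ≤ 2 * π * ((b : ℝ) ^ 2 / a) * ρ ^ 2)]
  refine ⟨abs_le.2 ⟨by linarith [(by positivity : 0 ≤ C * ρ ^ 2)], by linarith⟩, hE, ?_⟩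
  calc curveLength (torusCurve a b ρ) * bendingEnergy (torusCurve a b ρ)
      ≤ (2 * π * a + C * ρ ^ 2) * (2 * π * a + C * ρ ^ 2) :=
        mul_le_mul hL hE (bendingEnergy_nonneg _) (by positivity)
    _ ≤ (2 * π * a) ^ 2 + C * (4 * π * a + C) * ρ ^ 2 := by
        nlinarith [mul_le_mul_of_nonneg_left hρ2 (by positivity : 0 ≤ C ^ 2 * ρ ^ 2)]

/-- **Length and bending energy of comparison torus knots.**
For coprime `a, b ≥ 2` there are `C, C' > 0` and `ρ₀ > 0` such that for all `ρ ∈ (0, ρ₀]`: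
`|𝓛(τ_ρ) − 2πa| ≤ Cρ²` and `E_bend(τ_ρ) ≤ 2πa + Cρ²`; consequently the unit-length
arclength-parametrized rescaling `τ̃_ρ` satisfies
`E_bend(τ̃_ρ) = 𝓛(τ_ρ)·E_bend(τ_ρ) ≤ (2πa)² + C'ρ²`. -/
theorem stmt_10 (a b : ℤ) (ha : 2 ≤ a) (hb : 2 ≤ b) (hco : Int.gcd a b = 1) :
    ∃ C C' ρ₀ : ℝ, 0 < C ∧ 0 < C' ∧ 0 < ρ₀ ∧
      ∀ ρ ∈ Ioc (0:ℝ) ρ₀,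
        |curveLength (torusCurve a b ρ) - 2*π*a| ≤ C * ρ^2 ∧
        bendingEnergy (torusCurve a b ρ) ≤ 2*π*a + C * ρ^2 ∧
        curveLength (torusCurve a b ρ) * bendingEnergy (torusCurve a b ρ)
          ≤ (2*π*a)^2 + C' * ρ^2 :=
  stmt_10_general a b ha hb
end

section
/- Let γ : ℝ/ℤ → ℝ³ be an arclength-parametrized H² closed curve with total curvature T(γ) = ∫₀¹|γ''| and inscribed closed polygon p determined by parameters 0 ≤ t₁ < t₂ < ... < tₙ < 1 (with vertices γ(tᵢ)). Then the total curvature of p (the sum of exterior angles at its vertices) is at most T(γ). -/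
/-!
Each exterior angle of the polygon is at most the sum of the angles its two edges make with the
tangent `γ'(tᵢ)`, so it suffices to show that for every arc `[c, d]` the chord `W = γ d - γ c`
satisfies `∠(γ' c, W) + ∠(W, γ' d) ≤ ∫_c^d ‖γ''‖`. The chord is the limit of the left Riemann sums
`∑ Δ • γ'(c + jΔ)`, which are nonnegative combinations of tangent vectors. For a nonnegative
combination `W` of `v₀, …, v_m`, the triangle inequality for angles, which is an equality when the
middle vector lies in the cone spanned by the outer ones, gives
`∠(v₀, W) + ∠(W, v_m) ≤ ∑ ∠(vⱼ, vⱼ₊₁)`. Finally `∠(γ' x, γ' y)` is a distance on the unit sphere,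
hence at most the length `∫_x^y ‖γ''‖` of the tangent indicatrix between `x` and `y`.
-/

open Real Set MeasureTheory Filter Topology InnerProductGeometry

namespace InnerProductGeometry

variable {V : Type*} [NormedAddCommGroup V] [InnerProductSpace ℝ V]

theorem angle_sub_angle_pow_three_div_le_norm_sub {u v : V} (hu : ‖u‖ = 1) (hv : ‖v‖ = 1) :
    angle u v - angle u v ^ 3 / 24 ≤ ‖u - v‖ := by
  set θ := angle u v
  have hθ2 : 0 ≤ θ / 2 := by have := angle_nonneg u v; positivity
  have hsin : 0 ≤ sin (θ / 2) :=
    sin_nonneg_of_nonneg_of_le_pi hθ2 (by linarith [angle_le_pi u v, pi_pos])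
  have hchord : ‖u - v‖ = 2 * sin (θ / 2) := by
    have hcos : cos θ = 1 - 2 * sin (θ / 2) ^ 2 := by
      have h := cos_two_mul' (θ / 2)
      rw [show 2 * (θ / 2) = θ by ring] at h
      linarith [sin_sq_add_cos_sq (θ / 2)]
    have := norm_sub_sq_eq_norm_sq_add_norm_sq_sub_two_mul_norm_mul_norm_mul_cos_angle u v
    rw [hu, hv, hcos] at this
    rw [← sq_eq_sq₀ (norm_nonneg _) (by positivity), sq, this]
    ring
  rw [hchord]
  linarith [sin_ge_sub_cube hθ2]

theorem angle_le_sum_angle_succ (v : ℕ → V) (hv : v 0 ≠ 0) (m : ℕ) :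
    angle (v 0) (v m) ≤ ∑ j ∈ Finset.range m, angle (v j) (v (j + 1)) := by
  induction m with
  | zero => simp [angle_self hv]
  | succ k ih =>
    rw [Finset.sum_range_succ]
    linarith [angle_le_angle_add_angle (v 0) (v k) (v (k + 1))]

theorem angle_add_angle_sum_smul_le (v : ℕ → V) (hv : v 0 ≠ 0) {lam : ℕ → ℝ}
    (hlam : ∀ j, 0 ≤ lam j) {m : ℕ} (hW : ∑ j ∈ Finset.range m, lam j • v j ≠ 0) :
    angle (v 0) (∑ j ∈ Finset.range m, lam j • v j)
        + angle (∑ j ∈ Finset.range m, lam j • v j) (v m)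
      ≤ ∑ j ∈ Finset.range m, angle (v j) (v (j + 1)) := by
  induction m with
  | zero => simp at hW
  | succ k ih =>
    rw [Finset.sum_range_succ] at hW ⊢
    rw [Finset.sum_range_succ]
    set W := ∑ j ∈ Finset.range k, lam j • v j
    by_cases hW0 : W = 0
    · have hk : 0 < lam k := (hlam k).lt_of_ne fun h => by simp [hW0, ← h] at hW
      rw [hW0, zero_add, angle_smul_right_of_pos _ _ hk, angle_smul_left_of_pos _ _ hk]
      linarith [angle_le_sum_angle_succ v hv k]
    · have hspan : W + lam k • v k ∈ Submodule.span NNReal {W, v k} :=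
        Submodule.mem_span_pair.mpr ⟨1, ⟨lam k, hlam k⟩, by rw [one_smul]; rfl⟩
      have hsplit := angle_eq_angle_add_add_angle_add_of_mem_span hW hspan
      linarith [ih hW0, angle_le_angle_add_angle (v 0) W (W + lam k • v k),
        angle_le_angle_add_angle (W + lam k • v k) (v k) (v (k + 1))]

theorem _root_.Filter.Tendsto.angle {α : Type*} {l : Filter α} {f g : α → V} {x y : V}
    (hf : Tendsto f l (𝓝 x)) (hg : Tendsto g l (𝓝 y)) (hx : x ≠ 0) (hy : y ≠ 0) :
    Tendsto (fun a => angle (f a) (g a)) l (𝓝 (angle x y)) :=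
  ((continuousAt_angle (x := (x, y)) hx hy).tendsto.comp (hf.prodMk_nhds hg) :)

end InnerProductGeometry

section Riemann

variable {E : Type*} [NormedAddCommGroup E] {T : ℝ → E} {ℓ : ℝ → ℝ}

theorem monotone_of_norm_sub_le (hTℓ : ∀ x y, x ≤ y → ‖T y - T x‖ ≤ ℓ y - ℓ x) : Monotone ℓ :=
  fun x y hxy => sub_nonneg.1 ((norm_nonneg _).trans (hTℓ x y hxy))

variable [NormedSpace ℝ E]

noncomputable def leftRiemannSum (f : ℝ → E) (a b : ℝ) (m : ℕ) : E :=
  ∑ j ∈ Finset.range m, ((b - a) / m) • f (a + j * ((b - a) / m))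

variable [CompleteSpace E]

theorem norm_integral_sub_smul_le (hT : Continuous T)
    (hTℓ : ∀ x y, x ≤ y → ‖T y - T x‖ ≤ ℓ y - ℓ x) {x y : ℝ} (hxy : x ≤ y) :
    ‖(∫ s in x..y, T s) - (y - x) • T x‖ ≤ (y - x) * (ℓ y - ℓ x) := by
  have hbound : ∀ s ∈ uIoc x y, ‖T s - T x‖ ≤ ℓ y - ℓ x := by
    intro s hs
    rw [uIoc_of_le hxy] at hs
    exact (hTℓ x s hs.1.le).trans (by linarith [monotone_of_norm_sub_le hTℓ hs.2])
  have := intervalIntegral.norm_integral_le_of_norm_le_const hbound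
  rwa [intervalIntegral.integral_sub (hT.intervalIntegrable x y) intervalIntegrable_const,
    intervalIntegral.integral_const, abs_of_nonneg (sub_nonneg.2 hxy), mul_comm] at this

theorem norm_integral_sub_leftRiemannSum_le (hT : Continuous T)
    (hTℓ : ∀ x y, x ≤ y → ‖T y - T x‖ ≤ ℓ y - ℓ x) {a b : ℝ} (hab : a ≤ b) {m : ℕ}
    (hm : m ≠ 0) :
    ‖(∫ s in a..b, T s) - leftRiemannSum T a b m‖ ≤ (b - a) / m * (ℓ b - ℓ a) := by
  set Δ := (b - a) / m
  set p : ℕ → ℝ := fun j => a + j * Δ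
  have hp : ∀ j, p (j + 1) - p j = Δ := fun j => by simp only [p]; push_cast; ring
  have hp0 : p 0 = a := by simp [p]
  have hpm : p m = b := by simp only [p, Δ]; field_simp; ring
  have hsplit : ∫ s in a..b, T s = ∑ j ∈ Finset.range m, ∫ s in p j..p (j + 1), T s := by
    rw [intervalIntegral.sum_integral_adjacent_intervals
      fun j _ => hT.intervalIntegrable (p j) (p (j + 1)), hp0, hpm]
  have hΔ : 0 ≤ Δ := div_nonneg (sub_nonneg.2 hab) m.cast_nonneg
  calc ‖(∫ s in a..b, T s) - leftRiemannSum T a b m‖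
      = ‖∑ j ∈ Finset.range m, ((∫ s in p j..p (j + 1), T s) - (p (j + 1) - p j) • T (p j))‖ := by
        rw [hsplit, leftRiemannSum, ← Finset.sum_sub_distrib]
        simp only [hp, p, Δ]
    _ ≤ ∑ j ∈ Finset.range m, (p (j + 1) - p j) * (ℓ (p (j + 1)) - ℓ (p j)) :=
        (norm_sum_le _ _).trans (Finset.sum_le_sum fun j _ =>
          norm_integral_sub_smul_le hT hTℓ (by linarith [hp j]))
    _ = Δ * (ℓ b - ℓ a) := by
        simp only [hp]
        rw [← Finset.mul_sum, Finset.sum_range_sub (fun j => ℓ (p j)), hp0, hpm]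

theorem tendsto_leftRiemannSum (hT : Continuous T)
    (hTℓ : ∀ x y, x ≤ y → ‖T y - T x‖ ≤ ℓ y - ℓ x) {a b : ℝ} (hab : a ≤ b) :
    Tendsto (leftRiemannSum T a b) atTop (𝓝 (∫ s in a..b, T s)) := by
  rw [tendsto_iff_norm_sub_tendsto_zero]
  refine squeeze_zero' (g := fun m : ℕ => (b - a) / m * (ℓ b - ℓ a))
    (Eventually.of_forall fun m => norm_nonneg _) ?_ ?_
  · filter_upwards [eventually_ne_atTop 0] with m hm
    rw [norm_sub_rev]
    exact norm_integral_sub_leftRiemannSum_le hT hTℓ hab hm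
  · simpa using (tendsto_const_div_atTop_nhds_zero_nat (b - a)).mul_const (ℓ b - ℓ a)

end Riemann

section Curves

variable {V : Type*} [NormedAddCommGroup V] [InnerProductSpace ℝ V]
  {T : ℝ → V} {ℓ : ℝ → ℝ}

theorem angle_le_sub_of_norm_sub_le (hT : Continuous T) (hℓ : Continuous ℓ)
    (hunit : ∀ s, ‖T s‖ = 1) (hTℓ : ∀ x y, x ≤ y → ‖T y - T x‖ ≤ ℓ y - ℓ x)
    {a b : ℝ} (hab : a ≤ b) : angle (T a) (T b) ≤ ℓ b - ℓ a := by
  have hne : ∀ s, T s ≠ 0 := fun s h => by simpa [h] using hunit s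
  have hcont : ∀ x, Continuous fun s => angle (T x) (T s) := fun x =>
    continuous_iff_continuousAt.2 fun s => tendsto_const_nhds.angle (hT.tendsto s) (hne x) (hne s)
  have hscaled : ∀ ε ∈ Ioo (0 : ℝ) 1, (1 - ε) * angle (T a) (T b) ≤ ℓ b - ℓ a := by
    intro ε hε
    -- Continuous induction: near `x`, the angle between unit vectors is at most
    -- `(1 - ε)⁻¹` times the chord.
    set S := {s | (1 - ε) * angle (T a) (T s) ≤ ℓ s - ℓ a}
    have hS : IsClosed S := isClosed_le (continuous_const.mul (hcont a)) (hℓ.sub continuous_const)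
    refine (hS.inter isClosed_Icc).Icc_subset_of_forall_mem_nhdsWithin ?_ ?_ ⟨hab, le_rfl⟩
    · simp [S, angle_self (hne a)]
    · intro x hx
      have hsmall : ∀ᶠ z in 𝓝[>] x, angle (T x) (T z) ≤ ε := by
        have := ((hcont x).tendsto x).mono_left (nhdsWithin_le_nhds (s := Ioi x))
        rw [angle_self (hne x)] at this
        exact this.eventually (ge_mem_nhds hε.1)
      filter_upwards [hsmall, self_mem_nhdsWithin] with z hz hxz
      have hθ := angle_nonneg (T x) (T z)
      have hchord : (1 - ε) * angle (T x) (T z) ≤ ‖T x - T z‖ := by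
        have hsq : angle (T x) (T z) ^ 2 ≤ ε := by nlinarith [hε.2]
        nlinarith [angle_sub_angle_pow_three_div_le_norm_sub (hunit x) (hunit z),
          mul_le_mul_of_nonneg_left hsq hθ]
      calc (1 - ε) * angle (T a) (T z)
          ≤ (1 - ε) * angle (T a) (T x) + (1 - ε) * angle (T x) (T z) := by
            rw [← mul_add]
            exact mul_le_mul_of_nonneg_left (angle_le_angle_add_angle _ _ _) (by linarith [hε.2])
        _ ≤ (ℓ x - ℓ a) + (ℓ z - ℓ x) := by
            gcongr
            · exact hx.1
            · rw [norm_sub_rev] at hchord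
              exact hchord.trans (hTℓ x z (le_of_lt hxz))
        _ = ℓ z - ℓ a := by ring
  have hlim : Tendsto (fun ε => (1 - ε) * angle (T a) (T b)) (𝓝[>] 0) (𝓝 (angle (T a) (T b))) :=
    tendsto_nhdsWithin_of_tendsto_nhds (Continuous.tendsto' (by fun_prop) 0 _ (by simp))
  exact le_of_tendsto hlim (eventually_of_mem (Ioo_mem_nhdsGT one_pos) hscaled)

variable [CompleteSpace V]

theorem angle_add_angle_integral_le (hT : Continuous T) (hℓ : Continuous ℓ) (hunit : ∀ s, ‖T s‖ = 1)
    (hTℓ : ∀ x y, x ≤ y → ‖T y - T x‖ ≤ ℓ y - ℓ x) {c d : ℝ} (hcd : c ≤ d)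
    (hW : ∫ s in c..d, T s ≠ 0) :
    angle (T c) (∫ s in c..d, T s) + angle (∫ s in c..d, T s) (T d) ≤ ℓ d - ℓ c := by
  have hne : ∀ s, T s ≠ 0 := fun s h => by simpa [h] using hunit s
  have hlim := tendsto_leftRiemannSum hT hTℓ hcd
  refine le_of_tendsto ((tendsto_const_nhds.angle hlim (hne c) hW).add
    (hlim.angle tendsto_const_nhds hW (hne d))) ?_
  filter_upwards [hlim.eventually_ne hW, eventually_ne_atTop 0] with m hm hm0
  set Δ := (d - c) / m
  set v : ℕ → V := fun j => T (c + j * Δ)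
  have hΔ : 0 ≤ Δ := div_nonneg (sub_nonneg.2 hcd) m.cast_nonneg
  have hv0 : v 0 = T c := by simp [v]
  have hvm : v m = T d := by simp only [v, Δ]; congr 1; field_simp; ring
  have hchain : ∀ j, angle (v j) (v (j + 1)) ≤ ℓ (c + (j + 1 : ℕ) * Δ) - ℓ (c + j * Δ) :=
    fun j => angle_le_sub_of_norm_sub_le hT hℓ hunit hTℓ (by push_cast; nlinarith)
  calc angle (T c) (leftRiemannSum T c d m) + angle (leftRiemannSum T c d m) (T d)
      ≤ ∑ j ∈ Finset.range m, angle (v j) (v (j + 1)) := by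
        rw [← hv0, ← hvm]
        exact angle_add_angle_sum_smul_le v (hne _) (fun _ => hΔ) hm
    _ ≤ ∑ j ∈ Finset.range m, (ℓ (c + (j + 1 : ℕ) * Δ) - ℓ (c + j * Δ)) :=
        Finset.sum_le_sum fun j _ => hchain j
    _ = ℓ d - ℓ c := by
        rw [Finset.sum_range_sub (fun j : ℕ => ℓ (c + j * Δ))]
        simp only [Δ, Nat.cast_zero, zero_mul, add_zero]
        field_simp
        ring_nf

end Curves

section Periodic

theorem Function.Periodic.periodic_of_hasDerivAt {F : Type*} [NormedAddCommGroup F]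
    [NormedSpace ℝ F] {f f' : ℝ → F} {c : ℝ} (hf : Function.Periodic f c)
    (hd : ∀ x, HasDerivAt f (f' x) x) : Function.Periodic f' c := fun x => by
  have h := (hd (x + c)).comp_add_const x c
  rw [show (fun y => f (y + c)) = f from funext hf] at h
  exact h.unique (hd x)

-- The parameter of the vertex after `t i`, on the universal cover `ℝ` of `ℝ / ℤ`.
def nextLift {k : ℕ} (t : Fin (k + 1) → ℝ) (i : Fin (k + 1)) : ℝ :=
  t (i + 1) + if i = Fin.last k then 1 else 0

theorem le_nextLift {k : ℕ} {t : Fin (k + 1) → ℝ} (hmono : Monotone t)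
    (hwrap : t (Fin.last k) ≤ t 0 + 1) (i : Fin (k + 1)) : t i ≤ nextLift t i := by
  by_cases h : i = Fin.last k
  · simpa [nextLift, h] using hwrap
  · simpa [nextLift, h] using hmono (Fin.lt_add_one_iff.2 (Fin.lt_last_iff_ne_last.2 h)).le

theorem Function.Periodic.apply_nextLift {α : Type*} {f : ℝ → α} (hf : Function.Periodic f 1)
    {k : ℕ} (t : Fin (k + 1) → ℝ) (i : Fin (k + 1)) : f (nextLift t i) = f (t (i + 1)) := by
  unfold nextLift
  split_ifs <;> simp [hf _]

theorem Function.Periodic.sum_integral_nextLift {E : Type*} [NormedAddCommGroup E]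
    [NormedSpace ℝ E] {f : ℝ → E} (hf : Function.Periodic f 1)
    (hint : ∀ a b, IntervalIntegrable f volume a b) {k : ℕ} (t : Fin (k + 1) → ℝ) :
    ∑ i, ∫ s in t i..nextLift t i, f s = ∫ s in (0:ℝ)..1, f s := by
  set F : ℝ → E := fun x => ∫ s in (0:ℝ)..x, f s
  have hF : ∀ i, ∫ s in t i..nextLift t i, f s
      = (F (t (i + 1)) - F (t i)) + if i = Fin.last k then ∫ s in (0:ℝ)..1, f s else 0 := by
    intro i
    rw [← intervalIntegral.integral_interval_sub_left (hint 0 _) (hint 0 _)]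
    unfold nextLift
    split_ifs
    · rw [hf.intervalIntegral_add_eq_add 0 _ hint, zero_add]
      abel
    · simp [F]
  rw [Finset.sum_congr rfl fun i _ => hF i, Finset.sum_add_distrib, Finset.sum_sub_distrib,
    Fintype.sum_equiv (Equiv.addRight 1) (fun i => F (t (i + 1))) (fun i => F (t i))
      fun _ => rfl, sub_self, zero_add]
  simp

end Periodic

section ClosedCurves

variable {V : Type*} [NormedAddCommGroup V] [InnerProductSpace ℝ V]

theorem sum_angle_le_sum_angle_add_angle {n : ℕ} [NeZero n] (p τ : Fin n → V) :
    ∑ i, angle (p i - p (i - 1)) (p (i + 1) - p i)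
      ≤ ∑ i, (angle (τ i) (p (i + 1) - p i) + angle (p (i + 1) - p i) (τ (i + 1))) :=
  calc ∑ i, angle (p i - p (i - 1)) (p (i + 1) - p i)
      ≤ ∑ i, (angle (p i - p (i - 1)) (τ i) + angle (τ i) (p (i + 1) - p i)) :=
        Finset.sum_le_sum fun i _ => angle_le_angle_add_angle _ _ _
    _ = ∑ i, (angle (τ i) (p (i + 1) - p i) + angle (p (i + 1) - p i) (τ (i + 1))) := by
        rw [Finset.sum_add_distrib, Finset.sum_add_distrib, add_comm]
        congr 1
        exact Fintype.sum_equiv (Equiv.subRight 1) _ _ fun i => by simp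

variable [CompleteSpace V]

theorem angle_add_angle_sub_le_integral_norm {γ γ' γ'' : ℝ → V}
    (hd1 : ∀ t, HasDerivAt γ (γ' t) t) (harc : ∀ t, ‖γ' t‖ = 1)
    (hac : ∀ t, γ' t = γ' 0 + ∫ s in (0:ℝ)..t, γ'' s)
    (hii : ∀ a b, IntervalIntegrable γ'' volume a b) {a b : ℝ} (hab : a ≤ b) (hne : γ b ≠ γ a) :
    angle (γ' a) (γ b - γ a) + angle (γ b - γ a) (γ' b) ≤ ∫ s in a..b, ‖γ'' s‖ := by
  set ℓ : ℝ → ℝ := fun x => ∫ s in (0:ℝ)..x, ‖γ'' s‖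
  have hℓ : Continuous ℓ := intervalIntegral.continuous_primitive (fun x y => (hii x y).norm) 0
  have hℓsub : ∀ x y, ∫ s in x..y, ‖γ'' s‖ = ℓ y - ℓ x := fun x y =>
    (intervalIntegral.integral_interval_sub_left (hii 0 y).norm (hii 0 x).norm).symm
  have hT : Continuous γ' :=
    (continuous_const.add (intervalIntegral.continuous_primitive hii 0)).congr fun t => (hac t).symm
  have hTℓ : ∀ x y, x ≤ y → ‖γ' y - γ' x‖ ≤ ℓ y - ℓ x := by
    intro x y hxy
    rw [hac x, hac y, add_sub_add_left_eq_sub,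
      intervalIntegral.integral_interval_sub_left (hii 0 y) (hii 0 x), ← hℓsub]
    exact intervalIntegral.norm_integral_le_integral_norm hxy
  have hchord : γ b - γ a = ∫ s in a..b, γ' s :=
    (intervalIntegral.integral_eq_sub_of_hasDerivAt (fun t _ => hd1 t)
      (hT.intervalIntegrable a b)).symm
  rw [hchord, hℓsub]
  exact angle_add_angle_integral_le hT hℓ harc hTℓ hab (hchord ▸ sub_ne_zero.2 hne)

end ClosedCurves

theorem stmt_15_general (γ γ' γ'' : ℝ → EuclideanSpace ℝ (Fin 3))
    (hper : Function.Periodic γ 1) (hper'' : Function.Periodic γ'' 1)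
    (hd1 : ∀ t, HasDerivAt γ (γ' t) t)
    (harc : ∀ t, ‖γ' t‖ = 1)
    (hac : ∀ t, γ' t = γ' 0 + ∫ s in (0:ℝ)..t, γ'' s)
    (hint : IntegrableOn γ'' (Icc (0:ℝ) 1))
    (n : ℕ) [NeZero n]
    (t : Fin n → ℝ) (hmono : StrictMono t)
    (hrange : ∀ i, t i ∈ Ico (0:ℝ) 1)
    (hedges : ∀ i : Fin n, γ (t (i + 1)) ≠ γ (t i)) :
    (∑ i : Fin n, InnerProductGeometry.angle
        (γ (t i) - γ (t (i - 1))) (γ (t (i + 1)) - γ (t i)))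
      ≤ ∫ s in (0:ℝ)..1, ‖γ'' s‖ := by
  obtain ⟨k, rfl⟩ := Nat.exists_eq_succ_of_ne_zero (NeZero.ne n)
  have hii : ∀ a b, IntervalIntegrable γ'' volume a b := hper''.intervalIntegrable₀ one_ne_zero
    ((intervalIntegrable_iff_integrableOn_Icc_of_le zero_le_one).2 hint)
  have hper' := hper.periodic_of_hasDerivAt hd1
  have hwrap : t (Fin.last k) ≤ t 0 + 1 := by linarith [(hrange (Fin.last k)).2, (hrange 0).1]
  have hedge : ∀ i, angle (γ' (t i)) (γ (t (i + 1)) - γ (t i))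
      + angle (γ (t (i + 1)) - γ (t i)) (γ' (t (i + 1))) ≤ ∫ s in t i..nextLift t i, ‖γ'' s‖ :=
    fun i => by
      have := angle_add_angle_sub_le_integral_norm hd1 harc hac hii
        (le_nextLift hmono.monotone hwrap i) (by rw [hper.apply_nextLift]; exact hedges i)
      rwa [hper.apply_nextLift, hper'.apply_nextLift] at this
  calc _ ≤ ∑ i, (angle (γ' (t i)) (γ (t (i + 1)) - γ (t i))
          + angle (γ (t (i + 1)) - γ (t i)) (γ' (t (i + 1)))) :=
        sum_angle_le_sum_angle_add_angle (fun i => γ (t i)) (fun i => γ' (t i))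
    _ ≤ ∑ i, ∫ s in t i..nextLift t i, ‖γ'' s‖ := Finset.sum_le_sum fun i _ => hedge i
    _ = ∫ s in (0:ℝ)..1, ‖γ'' s‖ :=
        (hper''.comp norm).sum_integral_nextLift (fun a b => (hii a b).norm) t

/-- **Milnor's monotonicity of total curvature under inscription of polygons.**
Let `γ : ℝ/ℤ → ℝ³` be an arclength-parametrized `H²` closed curve and let
`0 ≤ t₀ < t₁ < ⋯ < t_{n−1} < 1` determine an inscribed closed polygon with vertices `γ(tᵢ)`
(and nondegenerate edges).  Then the total curvature of the polygon — the sum of the exterior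
angles at its vertices — is at most the total curvature `T(γ) = ∫₀¹ |γ''|` of the curve. -/
theorem stmt_15 (γ γ' γ'' : ℝ → EuclideanSpace ℝ (Fin 3))
    (hper : Function.Periodic γ 1) (hper'' : Function.Periodic γ'' 1)
    (hd1 : ∀ t, HasDerivAt γ (γ' t) t)
    (harc : ∀ t, ‖γ' t‖ = 1)
    (hac : ∀ t, γ' t = γ' 0 + ∫ s in (0:ℝ)..t, γ'' s)
    (hint : IntegrableOn γ'' (Icc (0:ℝ) 1))
    (n : ℕ) [NeZero n] (hn : 2 ≤ n)
    (t : Fin n → ℝ) (hmono : StrictMono t)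
    (hrange : ∀ i, t i ∈ Ico (0:ℝ) 1)
    (hedges : ∀ i : Fin n, γ (t (i + 1)) ≠ γ (t i)) :
    (∑ i : Fin n, InnerProductGeometry.angle
        (γ (t i) - γ (t (i - 1))) (γ (t (i + 1)) - γ (t i)))
      ≤ ∫ s in (0:ℝ)..1, ‖γ'' s‖ :=
  stmt_15_general γ γ' γ'' hper hper'' hd1 harc hac hint n t hmono hrange hedges
end
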